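/- Let H(q) = q⁵ ∏_{m≥1} (1-q^{2m})(1-q^{11m})^{13} / ((1-q^m)^3 (1-q^{22m})) as a formal power series over ℤ. Then U₁₁ H = q · (∑_{n≥0} Δ₅(11n+6) q^n) · ∏_{m≥1} (1-q^m)^{12}, as an exact identity of formal power series over ℤ. -/

import Mathlib

/-!
Dividing the two hypotheses gives `H = q⁵ · Δ(q) · E(q¹¹)¹²` with `E(q) = ∏_{m≥1} (1 - qᵐ)`.
Since `U₁₁` commutes with multiplication by a series in `q¹¹`, `U₁₁ H = U₁₁(q⁵ Δ(q)) · E(q)¹²`,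
and `U₁₁(q⁵ Δ(q)) = q ∑ Δ(11n + 6) qⁿ` because the coefficient of `q^{11(n+1)}` in `q⁵ Δ(q)`
is `Δ(11n + 6)`.
-/

open PowerSeries

/-- The infinite product `∏_{m ≥ 1} f m` of formal power series, for families with
`f m = 1 + O(q^m)` (as is the case for all factors of the form `(1 - q^{k·m})^e`):
its `n`-th coefficient is the `n`-th coefficient of the partial product `∏_{m=1}^{n} f m`,
since all further factors are `1 + O(q^{m})` with `m > n`. -/
noncomputable def prodQ (f : ℕ → PowerSeries ℤ) : PowerSeries ℤ :=
  PowerSeries.mk fun n => PowerSeries.coeff n (∏ m ∈ Finset.range n, f (m + 1))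

section PowerSeriesDvd

variable {R : Type*} [CommRing R]

theorem coeff_eq_of_X_pow_dvd_sub {P Q : PowerSeries R} {n : ℕ}
    (h : (X : PowerSeries R) ^ (n + 1) ∣ P - Q) : coeff n P = coeff n Q := by
  rw [X_pow_dvd_iff] at h
  simpa [sub_eq_zero] using h n n.lt_succ_self

theorem X_pow_dvd_prod_sub_one {ι : Type*} {s : Finset ι} {g : ι → PowerSeries R} {n : ℕ}
    (h : ∀ i ∈ s, (X : PowerSeries R) ^ n ∣ g i - 1) :
    (X : PowerSeries R) ^ n ∣ (∏ i ∈ s, g i) - 1 := by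
  classical
  induction s using Finset.induction with
  | empty => simp
  | insert a s ha ih =>
    rw [Finset.prod_insert ha,
      show g a * ∏ i ∈ s, g i - 1 = g a * (∏ i ∈ s, g i - 1) + (g a - 1) by ring]
    exact dvd_add ((ih fun i hi => h i (Finset.mem_insert_of_mem hi)).mul_left _)
      (h a (Finset.mem_insert_self a s))

end PowerSeriesDvd

/-- The condition `f m ≡ 1 mod q^m` under which `prodQ f` is the infinite product `∏_{m≥1} f m`. -/
def ProdQAdmissible (f : ℕ → PowerSeries ℤ) : Prop :=
  ∀ m : ℕ, (X : PowerSeries ℤ) ^ (m + 1) ∣ f (m + 1) - 1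

namespace ProdQAdmissible

variable {f g : ℕ → PowerSeries ℤ}

theorem mul (hf : ProdQAdmissible f) (hg : ProdQAdmissible g) :
    ProdQAdmissible fun m => f m * g m := fun m => by
  rw [show f (m + 1) * g (m + 1) - 1 = f (m + 1) * (g (m + 1) - 1) + (f (m + 1) - 1) by ring]
  exact dvd_add ((hg m).mul_left _) (hf m)

theorem pow (hf : ProdQAdmissible f) (e : ℕ) : ProdQAdmissible fun m => f m ^ e := fun m =>
  (hf m).trans (by simpa using sub_dvd_pow_sub_pow (f (m + 1)) 1 e)

end ProdQAdmissible

theorem prodQAdmissible_one_sub_X_pow_mul {a : ℕ} (ha : a ≠ 0) :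
    ProdQAdmissible fun m => 1 - X ^ (a * m) := fun m => by
  rw [sub_sub_cancel_left, dvd_neg]
  exact pow_dvd_pow X (Nat.le_mul_of_pos_left _ (Nat.pos_of_ne_zero ha))

theorem coeff_prod_range_eq_coeff_prodQ {f : ℕ → PowerSeries ℤ} (hf : ProdQAdmissible f)
    {n N : ℕ} (hn : n ≤ N) :
    coeff n (∏ m ∈ Finset.range N, f (m + 1)) = coeff n (prodQ f) := by
  rw [prodQ, coeff_mk, Finset.range_eq_Ico, ← Finset.prod_Ico_consecutive _ (Nat.zero_le n) hn,
    ← Finset.range_eq_Ico]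
  apply coeff_eq_of_X_pow_dvd_sub
  rw [← mul_sub_one]
  refine Dvd.dvd.mul_left (X_pow_dvd_prod_sub_one fun m hm => ?_) _
  exact (pow_dvd_pow X (by simp at hm; omega)).trans (hf m)

theorem prodQ_mul {f g : ℕ → PowerSeries ℤ} (hf : ProdQAdmissible f) (hg : ProdQAdmissible g) :
    prodQ (fun m => f m * g m) = prodQ f * prodQ g := by
  ext n
  rw [prodQ, coeff_mk, Finset.prod_mul_distrib, coeff_mul, coeff_mul]
  refine Finset.sum_congr rfl fun x hx => ?_
  rw [Finset.HasAntidiagonal.mem_antidiagonal] at hx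
  rw [coeff_prod_range_eq_coeff_prodQ hf (by omega : x.1 ≤ n),
    coeff_prod_range_eq_coeff_prodQ hg (by omega : x.2 ≤ n)]

theorem prodQ_ne_zero (f : ℕ → PowerSeries ℤ) : prodQ f ≠ 0 := fun h => by
  simpa [prodQ] using congrArg (coeff 0) h

theorem prodQ_expand {f : ℕ → PowerSeries ℤ} (hf : ProdQAdmissible f) {p : ℕ} (hp : p ≠ 0) :
    prodQ (fun m => expand p hp (f m)) = expand p hp (prodQ f) := by
  ext n
  rw [prodQ, coeff_mk, ← map_prod, coeff_expand, coeff_expand]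
  split_ifs
  · exact coeff_prod_range_eq_coeff_prodQ hf (Nat.div_le_self n p)
  · rfl

/-- The operator `U_p`. -/
noncomputable def uOp (p : ℕ) (F : PowerSeries ℤ) : PowerSeries ℤ :=
  mk fun n => coeff (p * n) F

open Finset.HasAntidiagonal in
theorem uOp_mul_expand {p : ℕ} (hp : p ≠ 0) (F G : PowerSeries ℤ) :
    uOp p (F * expand p hp G) = uOp p F * G := by
  ext n
  have hinj : Function.Injective fun x : ℕ × ℕ => (p * x.1, p * x.2) := fun x y h => by
    simp only [Prod.mk.injEq, mul_right_inj' hp] at h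
    exact Prod.ext h.1 h.2
  have hsub : (antidiagonal n).image (fun x => (p * x.1, p * x.2)) ⊆ antidiagonal (p * n) := by
    intro x hx
    simp only [Finset.mem_image, mem_antidiagonal] at hx ⊢
    obtain ⟨y, hy, rfl⟩ := hx
    rw [← hy, mul_add]
  simp only [uOp, coeff_mk, coeff_mul]
  rw [← Finset.sum_subset hsub, Finset.sum_image fun x _ y _ h => hinj h]
  · simp only [coeff_expand_mul]
  · intro x hx hx'
    rw [coeff_expand_of_not_dvd p hp, mul_zero]
    rintro ⟨j, hj⟩
    rw [mem_antidiagonal] at hx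
    obtain ⟨i, hi⟩ : p ∣ x.1 := (Nat.dvd_add_left ⟨j, hj⟩).mp (hx ▸ dvd_mul_right p n)
    refine hx' (Finset.mem_image.mpr ⟨(i, j), ?_, Prod.ext hi.symm hj.symm⟩)
    rw [mem_antidiagonal, ← mul_right_inj' hp, mul_add, ← hi, ← hj, hx]

theorem uOp_X_pow_mul {p r : ℕ} (hr : 0 < r) (hrp : r ≤ p) (F : PowerSeries ℤ) :
    uOp p (X ^ r * F) = X * mk fun n => coeff (p * n + (p - r)) F := by
  ext (_ | n)
  · simp [uOp, coeff_X_pow_mul', hr.ne']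
  · rw [uOp, coeff_succ_X_mul, coeff_mk, coeff_mk, coeff_X_pow_mul', if_pos (by nlinarith),
      mul_add, mul_one, Nat.add_sub_assoc hrp]

/-- For H(q) = q⁵ ∏_{m≥1} (1-q^{2m})(1-q^{11m})^{13} / ((1-q^m)^3 (1-q^{22m})),
one has U₁₁ H = q · (∑_{n≥0} Δ₅(11n+6) qⁿ) · ∏_{m≥1} (1-q^m)^{12}, where Δ₅ is the broken
5-diamond partition function, given by
∑ Δ₅(n) qⁿ = ∏_{m≥1} (1-q^{2m})(1-q^{11m}) / ((1-q^m)^3 (1-q^{22m})), and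
U₁₁ (∑ a(n) qⁿ) = ∑ a(11n) qⁿ. -/
theorem stmt3 (Δ₅ : ℕ → ℤ) (H : PowerSeries ℤ)
    (hΔ : (PowerSeries.mk Δ₅) * prodQ (fun m => (1 - X ^ m) ^ 3 * (1 - X ^ (22 * m)))
        = prodQ (fun m => (1 - X ^ (2 * m)) * (1 - X ^ (11 * m))))
    (hH : H * prodQ (fun m => (1 - X ^ m) ^ 3 * (1 - X ^ (22 * m)))
        = X ^ 5 * prodQ (fun m => (1 - X ^ (2 * m)) * (1 - X ^ (11 * m)) ^ 13)) :
    PowerSeries.mk (fun n => PowerSeries.coeff (11 * n) H)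
      = X * PowerSeries.mk (fun n => Δ₅ (11 * n + 6)) * prodQ (fun m => (1 - X ^ m) ^ 12) := by
  have h11 : (11 : ℕ) ≠ 0 := by norm_num
  have hDilate : prodQ (fun m => (1 - X ^ (11 * m)) ^ 12)
      = expand 11 h11 (prodQ fun m => (1 - X ^ m) ^ 12) := by
    have hAdm : ProdQAdmissible fun m => (1 - X ^ m) ^ 12 := by
      simpa using (prodQAdmissible_one_sub_X_pow_mul one_ne_zero).pow 12
    rw [← prodQ_expand hAdm]
    simp [pow_mul]
  have hNum : prodQ (fun m => (1 - X ^ (2 * m)) * (1 - X ^ (11 * m)) ^ 13)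
      = prodQ (fun m => (1 - X ^ (2 * m)) * (1 - X ^ (11 * m)))
        * prodQ (fun m => (1 - X ^ (11 * m)) ^ 12) := by
    rw [← prodQ_mul ((prodQAdmissible_one_sub_X_pow_mul (by norm_num)).mul
      (prodQAdmissible_one_sub_X_pow_mul h11)) ((prodQAdmissible_one_sub_X_pow_mul h11).pow 12)]
    congr 1
    ext1 m
    ring
  have hHΔ : H = X ^ 5 * mk Δ₅ * expand 11 h11 (prodQ fun m => (1 - X ^ m) ^ 12) := by
    apply mul_right_cancel₀ (prodQ_ne_zero _)
    rw [hH, hNum, hDilate, ← hΔ]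
    ring
  change uOp 11 H = _
  rw [hHΔ, uOp_mul_expand, uOp_X_pow_mul (by norm_num) (by norm_num)]
  simp only [coeff_mk]
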